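/- arXiv:2410.07870 — 4 statements merged into one kernel-verified Lean document; each statement's English description precedes it below -/
import Mathlib

section
/- Let a_1, ..., a_N be vectors in R^d and let 1 ≤ K ≤ N. Let B(K,N) denote the set of subsets of {1,...,N} of cardinality K. Then ‖∑_{i=1}^N a_i‖² = (N/K) · (1/binom(N,K)) · ∑_{B ∈ B(K,N)} ‖∑_{i∈B} a_i‖² + 2·((N−K)/(N−1)) · ∑_{1≤i<j≤N} ⟨a_i, a_j⟩. -/
/-!
Expanding `‖∑ i ∈ B, a i‖ ^ 2 = ∑ i ∈ B, ∑ j ∈ B, ⟪a i, a j⟫` and summing over all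
`K`-subsets `B`, the term `⟪a i, a j⟫` is counted once for every `K`-subset containing
`{i, j}`: there are `C(N, K) K / N` of them if `i = j` and `C(N, K) K (K - 1) / (N (N - 1))`
if `i ≠ j`. So the batch average `(N / K) C(N, K)⁻¹ ∑_B ‖∑ i ∈ B, a i‖ ^ 2` equals
`∑ i, ‖a i‖ ^ 2 + 2 (K - 1) / (N - 1) ∑_{i < j} ⟪a i, a j⟫`, which falls short of
`‖∑ i, a i‖ ^ 2` by exactly `2 (N - K) / (N - 1) ∑_{i < j} ⟪a i, a j⟫`.
-/

open Finset RealInnerProductSpace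

namespace Finset

theorem sum_sum_eq_sum_add_two_nsmul_sum_Ioi {ι M : Type*} [Fintype ι] [LinearOrder ι]
    [LocallyFiniteOrderTop ι] [LocallyFiniteOrderBot ι] [AddCommMonoid M]
    (f : ι → ι → M) (hf : ∀ i j, f i j = f j i) :
    ∑ i, ∑ j, f i j = ∑ i, f i i + 2 • ∑ i, ∑ j ∈ Ioi i, f i j := by
  classical
  calc ∑ i, ∑ j, f i j = ∑ i, (f i i + ∑ j ∈ {i}ᶜ, f j i) := by
        refine sum_congr rfl fun i _ => ?_
        rw [Fintype.sum_eq_add_sum_compl i]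
        exact congrArg _ (sum_congr rfl fun j _ => hf i j)
    _ = ∑ i, f i i + ∑ i, ∑ j ∈ Ioi i, (f j i + f i j) := by
        rw [sum_add_distrib, sum_sum_Ioi_add_eq_sum_sum_off_diag]
    _ = ∑ i, f i i + 2 • ∑ i, ∑ j ∈ Ioi i, f i j := by
        simp only [two_nsmul, ← sum_add_distrib, hf _ (_ : ι)]

variable {ι : Type*} [DecidableEq ι]

/-- Descending factorials make this hold also when `#t > K`, where both sides vanish. -/
theorem card_filter_powersetCard_subset_mul_descFactorial (s t : Finset ι) (K : ℕ)
    (hts : t ⊆ s) :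
    #{B ∈ s.powersetCard K | t ⊆ B} * (#s).descFactorial #t
      = (#s).choose K * K.descFactorial #t := by
  by_cases htK : #t ≤ K
  · rw [card_filter_powersetCard_subset t s K hts htK, Nat.descFactorial_eq_factorial_mul_choose,
      Nat.descFactorial_eq_factorial_mul_choose, mul_left_comm ((#s).choose K),
      Nat.choose_mul htK]
    ring
  · have hempty : {B ∈ s.powersetCard K | t ⊆ B} = ∅ :=
      filter_false_of_mem fun B hB htB => htK <| (mem_powersetCard.1 hB).2 ▸ card_le_card htB
    rw [hempty, Nat.descFactorial_eq_zero_iff_lt.2 (not_le.1 htK)]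
    simp

theorem sum_powersetCard_sum_sum {M : Type*} [AddCommMonoid M] (s : Finset ι) (K : ℕ)
    (f : ι → ι → M) :
    ∑ B ∈ s.powersetCard K, ∑ i ∈ B, ∑ j ∈ B, f i j
      = ∑ i ∈ s, ∑ j ∈ s, #{B ∈ s.powersetCard K | {i, j} ⊆ B} • f i j := by
  rw [sum_comm' (t' := s) (s' := fun i => {B ∈ s.powersetCard K | i ∈ B}) (by grind)]
  refine sum_congr rfl fun i _ => ?_
  rw [sum_comm' (t' := s) (s' := fun j => {B ∈ s.powersetCard K | i ∈ B ∧ j ∈ B})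
    (by grind)]
  simp [insert_subset_iff]

end Finset

section InnerProductSpace

variable {V : Type*} [NormedAddCommGroup V] [InnerProductSpace ℝ V] {ι : Type*}

theorem norm_sum_sq_eq_sum_sum_inner (s : Finset ι) (a : ι → V) :
    ‖∑ i ∈ s, a i‖ ^ 2 = ∑ i ∈ s, ∑ j ∈ s, ⟪a i, a j⟫ := by
  rw [← real_inner_self_eq_norm_sq, sum_inner]
  simp_rw [inner_sum]

variable [Fintype ι] [LinearOrder ι] [LocallyFiniteOrderTop ι] [LocallyFiniteOrderBot ι]

theorem norm_sum_sq_eq_sum_norm_sq_add_two_mul_sum_Ioi (a : ι → V) :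
    ‖∑ i, a i‖ ^ 2 = ∑ i, ‖a i‖ ^ 2 + 2 * ∑ i, ∑ j ∈ Ioi i, ⟪a i, a j⟫ := by
  rw [norm_sum_sq_eq_sum_sum_inner,
    sum_sum_eq_sum_add_two_nsmul_sum_Ioi _ fun i j => real_inner_comm (a j) (a i)]
  simp

theorem card_mul_sum_powersetCard_norm_sum_sq (K : ℕ) (a : ι → V) :
    (Fintype.card ι : ℝ) * (Fintype.card ι - 1) *
        ∑ B ∈ powersetCard K univ, ‖∑ i ∈ B, a i‖ ^ 2
      = (Fintype.card ι).choose K * K *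
          ((Fintype.card ι - 1) * ∑ i, ‖a i‖ ^ 2 +
            (K - 1) * (2 * ∑ i, ∑ j ∈ Ioi i, ⟪a i, a j⟫)) := by
  classical
  set n := Fintype.card ι
  have count (t : Finset ι) :
      (#{B ∈ powersetCard K univ | t ⊆ B} : ℝ) * n.descFactorial #t
        = n.choose K * K.descFactorial #t := by
    exact_mod_cast card_filter_powersetCard_subset_mul_descFactorial univ t K (subset_univ t)
  simp only [norm_sum_sq_eq_sum_sum_inner, sum_powersetCard_sum_sum, nsmul_eq_mul]
  rw [sum_sum_eq_sum_add_two_nsmul_sum_Ioi _ fun i j => by rw [pair_comm, real_inner_comm]]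
  have diag (i : ι) :
      (n : ℝ) * (n - 1) * (#{B ∈ powersetCard K univ | {i, i} ⊆ B} * ⟪a i, a i⟫)
        = n.choose K * K * ((n - 1) * ‖a i‖ ^ 2) := by
    have h := count {i}
    rw [card_singleton, Nat.descFactorial_one, Nat.descFactorial_one] at h
    rw [pair_eq_singleton, real_inner_self_eq_norm_sq]
    linear_combination ((n : ℝ) - 1) * ‖a i‖ ^ 2 * h
  have offDiag (i j : ι) (hij : j ∈ Ioi i) :
      (n : ℝ) * (n - 1) * (#{B ∈ powersetCard K univ | {i, j} ⊆ B} * ⟪a i, a j⟫)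
        = n.choose K * K * ((K - 1) * ⟪a i, a j⟫) := by
    have h := count {i, j}
    rw [card_pair (mem_Ioi.1 hij).ne, Nat.cast_descFactorial_two, Nat.cast_descFactorial_two] at h
    linear_combination ⟪a i, a j⟫ * h
  have hdiag := sum_congr rfl fun i (_ : i ∈ univ) => diag i
  have hoffDiag := sum_congr rfl fun i (_ : i ∈ univ) => sum_congr rfl (offDiag i)
  simp only [← mul_sum] at hdiag hoffDiag
  rw [nsmul_eq_mul]
  linear_combination hdiag + 2 * hoffDiag

end InnerProductSpace

/-- Lemma: decomposition of the squared norm of a sum of vectors into the average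
squared norm of batch sums of size `K` plus the pairwise inner products. -/
theorem stmt0 {V : Type*} [NormedAddCommGroup V] [InnerProductSpace ℝ V]
    {N : ℕ} (hN : 2 ≤ N) (K : ℕ) (hK1 : 1 ≤ K) (hKN : K ≤ N)
    (a : Fin N → V) :
    ‖∑ i, a i‖ ^ 2 =
      ((N : ℝ) / K) * ((N.choose K : ℝ))⁻¹ *
        ∑ B ∈ Finset.powersetCard K (Finset.univ : Finset (Fin N)), ‖∑ i ∈ B, a i‖ ^ 2
      + 2 * (((N : ℝ) - K) / ((N : ℝ) - 1)) *
        ∑ i : Fin N, ∑ j ∈ Finset.univ.filter (fun j => i < j), ⟪a i, a j⟫ := by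
  have hN1 : (N : ℝ) - 1 ≠ 0 := by
    rw [sub_ne_zero]; exact_mod_cast (by omega : N ≠ 1)
  have hK : (K : ℝ) ≠ 0 := by exact_mod_cast (by omega : K ≠ 0)
  have hC : (N.choose K : ℝ) ≠ 0 := by exact_mod_cast (Nat.choose_pos hKN).ne'
  have hbatch := card_mul_sum_powersetCard_norm_sum_sq K a
  rw [Fintype.card_fin] at hbatch
  simp only [filter_lt_eq_Ioi, norm_sum_sq_eq_sum_norm_sq_add_two_mul_sum_Ioi]
  field_simp
  linear_combination -hbatch
end

section
/- Let f = (1/N)∑_{i=1}^N f_i with each f_i differentiable. If for all x ∈ R^d, ∑_{1≤i<j≤N} ⟨∇f_i(x), ∇f_j(x)⟩ ≥ 0 (positive average gradient correlation), then for every batch size K the strong growth condition holds with constant N/K, i.e. E[‖∇̃_K(x)‖²] ≤ (N/K)·‖∇f(x)‖² for all x. -/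
open Finset RealInnerProductSpace

/-! Write `gᵢ = ∇fᵢ(x)`. Expanding `‖∑_{i ∈ B} gᵢ‖²` and counting the `K`-subsets that contain
a given index (`r = C(N-1, K-1)` of them) or a given pair (`m ≤ r` of them) gives
`∑_B ‖∑_{i ∈ B} gᵢ‖² = m ‖∑ gᵢ‖² + (r - m) ∑ ‖gᵢ‖²`. Positive correlation says exactly
`∑ ‖gᵢ‖² ≤ ‖∑ gᵢ‖²`, so the sum is at most `r ‖∑ gᵢ‖²`, and `N r = K C(N, K)` turns this into the
strong growth bound. -/

section Gradient

variable {F : Type*} [NormedAddCommGroup F] [InnerProductSpace ℝ F] [CompleteSpace F]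
  {ι : Type*} {s : Finset ι} {f : ι → F → ℝ} {x : F}

theorem HasGradientAt.fun_sum {f' : ι → F} (h : ∀ i ∈ s, HasGradientAt (f i) (f' i) x) :
    HasGradientAt (fun y => ∑ i ∈ s, f i y) (∑ i ∈ s, f' i) x := by
  rw [hasGradientAt_iff_hasFDerivAt, map_sum]
  exact HasFDerivAt.fun_sum fun i hi => hasGradientAt_iff_hasFDerivAt.mp (h i hi)

theorem HasGradientAt.const_mul {g : F → ℝ} {g' : F} (h : HasGradientAt g g' x) (c : ℝ) :
    HasGradientAt (fun y => c * g y) (c • g') x := by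
  rw [hasGradientAt_iff_hasFDerivAt, map_smul]
  exact (hasGradientAt_iff_hasFDerivAt.mp h).const_mul c

theorem gradient_const_mul_sum (h : ∀ i ∈ s, DifferentiableAt ℝ (f i) x) (c : ℝ) :
    gradient (fun y => c * ∑ i ∈ s, f i y) x = c • ∑ i ∈ s, gradient (f i) x :=
  ((HasGradientAt.fun_sum fun i hi => (h i hi).hasGradientAt).const_mul c).gradient

end Gradient

theorem sum_sum_eq_sum_add_two_mul_sum_lt {ι R : Type*} [Fintype ι] [LinearOrder ι]
    [CommSemiring R] (c : ι → ι → R) (hc : ∀ i j, c i j = c j i) :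
    ∑ i, ∑ j, c i j = ∑ i, c i i + 2 * ∑ i, ∑ j with i < j, c i j := by
  have hlower : ∑ i, ∑ j with j < i, c i j = ∑ i, ∑ j with i < j, c i j := by
    rw [Finset.sum_comm' (t' := univ) (s' := fun j => {i | j < i})]
    · simp only [hc]
    · simp
  have hsplit : ∀ i, ∑ j, c i j = ∑ j with j < i, c i j + c i i + ∑ j with i < j, c i j := by
    intro i
    rw [sum_filter, sum_filter, ← Fintype.sum_ite_eq i (c i), ← sum_add_distrib,
      ← sum_add_distrib]
    refine sum_congr rfl fun j _ => ?_
    rcases lt_trichotomy j i with hji | rfl | hij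
    · simp [hji, hji.ne', hji.not_gt]
    · simp
    · simp [hij, hij.ne, hij.not_gt]
  simp only [hsplit, sum_add_distrib, hlower]
  ring

section Counting

variable {ι : Type*} [DecidableEq ι] (s : Finset ι)

theorem card_filter_mem_powersetCard {K : ℕ} {i : ι} (hi : i ∈ s) (hK : 1 ≤ K) :
    #{B ∈ s.powersetCard K | i ∈ B} = (#s - 1).choose (K - 1) := by
  simpa using card_filter_powersetCard_subset {i} s K (by simpa) (by simpa)

theorem card_filter_mem_mem_powersetCard (K : ℕ) {i j : ι} (hi : i ∈ s) (hj : j ∈ s)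
    (hij : i ≠ j) :
    #{B ∈ s.powersetCard K | i ∈ B ∧ j ∈ B} = if 2 ≤ K then (#s - 2).choose (K - 2) else 0 := by
  have hpair : #({i, j} : Finset ι) = 2 := card_pair hij
  split_ifs with hK
  · rw [← hpair, ← card_filter_powersetCard_subset {i, j} s K (insert_subset hi (by simpa))
      (hpair ▸ hK)]
    simp [insert_subset_iff]
  · rw [card_eq_zero, filter_eq_empty_iff]
    rintro B hB ⟨hiB, hjB⟩
    have := card_le_card (insert_subset hiB (singleton_subset_iff.2 hjB))
    rw [hpair, (mem_powersetCard.1 hB).2] at this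
    omega

variable {E : Type*} [NormedAddCommGroup E] [InnerProductSpace ℝ E]

theorem sum_norm_sum_sq_eq_sum_sum_card_mul_inner {𝒜 : Finset (Finset ι)}
    (h𝒜 : ∀ B ∈ 𝒜, B ⊆ s) (g : ι → E) :
    ∑ B ∈ 𝒜, ‖∑ i ∈ B, g i‖ ^ 2
      = ∑ i ∈ s, ∑ j ∈ s, (#{B ∈ 𝒜 | i ∈ B ∧ j ∈ B} : ℝ) * ⟪g i, g j⟫ := by
  have hB : ∀ B ∈ 𝒜, ‖∑ i ∈ B, g i‖ ^ 2
      = ∑ i ∈ s, ∑ j ∈ s, if i ∈ B ∧ j ∈ B then ⟪g i, g j⟫ else 0 := by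
    intro B hB
    have hBs : s ∩ B = B := inter_eq_right.2 (h𝒜 B hB)
    simp only [ite_and, sum_ite_irrel, sum_const_zero, sum_ite_mem, hBs]
    rw [← real_inner_self_eq_norm_sq, sum_inner]
    simp only [inner_sum]
  rw [sum_congr rfl hB, sum_comm]
  refine sum_congr rfl fun i _ => ?_
  rw [sum_comm]
  refine sum_congr rfl fun j _ => ?_
  rw [← sum_filter, sum_const, nsmul_eq_mul]

theorem sum_norm_sum_sq_eq_of_card_filter_eq {𝒜 : Finset (Finset ι)} (h𝒜 : ∀ B ∈ 𝒜, B ⊆ s)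
    {r m : ℕ} (hr : ∀ i ∈ s, #{B ∈ 𝒜 | i ∈ B} = r)
    (hm : ∀ i ∈ s, ∀ j ∈ s, i ≠ j → #{B ∈ 𝒜 | i ∈ B ∧ j ∈ B} = m) (g : ι → E) :
    ∑ B ∈ 𝒜, ‖∑ i ∈ B, g i‖ ^ 2
      = m * ‖∑ i ∈ s, g i‖ ^ 2 + (r - m) * ∑ i ∈ s, ‖g i‖ ^ 2 := by
  have hcount : ∀ i ∈ s, ∀ j ∈ s,
      (#{B ∈ 𝒜 | i ∈ B ∧ j ∈ B} : ℝ) = m + if i = j then (r - m : ℝ) else 0 := by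
    intro i hi j hj
    split_ifs with hij
    · subst hij
      simp [hr i hi]
    · simp [hm i hi j hj hij]
  rw [sum_norm_sum_sq_eq_sum_sum_card_mul_inner s h𝒜, ← real_inner_self_eq_norm_sq, sum_inner]
  simp only [inner_sum, mul_sum, ← sum_add_distrib]
  refine sum_congr rfl fun i hi => ?_
  rw [sum_congr rfl fun j hj => by rw [hcount i hi j hj]]
  simp [add_mul, sum_add_distrib, ite_mul, hi]

theorem sum_powersetCard_norm_sum_sq_le {K : ℕ} (hK : 1 ≤ K) (hKs : K ≤ #s) {g : ι → E}
    (hg : ∑ i ∈ s, ‖g i‖ ^ 2 ≤ ‖∑ i ∈ s, g i‖ ^ 2) :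
    ∑ B ∈ s.powersetCard K, ‖∑ i ∈ B, g i‖ ^ 2
      ≤ (#s - 1).choose (K - 1) * ‖∑ i ∈ s, g i‖ ^ 2 := by
  set m := if 2 ≤ K then (#s - 2).choose (K - 2) else 0
  have hm : m ≤ (#s - 1).choose (K - 1) := by
    by_cases h2 : 2 ≤ K
    · obtain ⟨n, hn⟩ : ∃ n, #s = n + 2 := ⟨#s - 2, by omega⟩
      obtain ⟨k, rfl⟩ : ∃ k, K = k + 2 := ⟨K - 2, by omega⟩
      simp [m, hn, Nat.choose_succ_succ]
    · simp [m, h2]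
  rw [sum_norm_sum_sq_eq_of_card_filter_eq s (fun B hB => (mem_powersetCard.1 hB).1)
    (fun i hi => card_filter_mem_powersetCard s hi hK)
    (fun i hi j hj hij => card_filter_mem_mem_powersetCard s K hi hj hij)]
  have hm' : (m : ℝ) ≤ (#s - 1).choose (K - 1) := by exact_mod_cast hm
  nlinarith [mul_le_mul_of_nonneg_left hg (sub_nonneg.2 hm')]

theorem norm_sum_sq_eq_sum_norm_sq_add_two_mul_sum_lt {ι E : Type*} [Fintype ι] [LinearOrder ι]
    [NormedAddCommGroup E] [InnerProductSpace ℝ E] (g : ι → E) :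
    ‖∑ i, g i‖ ^ 2 = ∑ i, ‖g i‖ ^ 2 + 2 * ∑ i, ∑ j with i < j, ⟪g i, g j⟫ := by
  rw [← real_inner_self_eq_norm_sq, sum_inner]
  simp only [inner_sum]
  rw [sum_sum_eq_sum_add_two_mul_sum_lt _ fun i j => real_inner_comm (g j) (g i)]
  simp only [real_inner_self_eq_norm_sq]

theorem stmt2_general {d N : ℕ}
    (f : Fin N → EuclideanSpace ℝ (Fin d) → ℝ)
    (hdiff : ∀ i, Differentiable ℝ (f i))
    (hposcorr : ∀ x : EuclideanSpace ℝ (Fin d),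
      0 ≤ ∑ i : Fin N, ∑ j ∈ Finset.univ.filter (fun j => i < j),
        ⟪gradient (f i) x, gradient (f j) x⟫) :
    ∀ K : ℕ, 1 ≤ K → K ≤ N → ∀ x : EuclideanSpace ℝ (Fin d),
      ((N.choose K : ℝ))⁻¹ *
        ∑ B ∈ Finset.powersetCard K (Finset.univ : Finset (Fin N)),
          ‖(K : ℝ)⁻¹ • ∑ i ∈ B, gradient (f i) x‖ ^ 2
      ≤ ((N : ℝ) / K) * ‖gradient (fun y => (N : ℝ)⁻¹ * ∑ i, f i y) x‖ ^ 2 := by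
  intro K hK hKN x
  have hsq : ∑ i, ‖gradient (f i) x‖ ^ 2 ≤ ‖∑ i, gradient (f i) x‖ ^ 2 := by
    rw [norm_sum_sq_eq_sum_norm_sq_add_two_mul_sum_lt]
    linarith [hposcorr x]
  have hbound := sum_powersetCard_norm_sum_sq_le univ hK (by simpa using hKN) hsq
  have hcount : (N : ℝ) * (N - 1).choose (K - 1) = K * N.choose K := by
    obtain ⟨n, rfl⟩ : ∃ n, N = n + 1 := ⟨N - 1, by omega⟩
    obtain ⟨k, rfl⟩ : ∃ k, K = k + 1 := ⟨K - 1, by omega⟩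
    simp only [Nat.add_sub_cancel]
    rw [mul_comm ((k + 1 : ℕ) : ℝ)]
    exact_mod_cast Nat.add_one_mul_choose_eq n k
  have hK0 : (0 : ℝ) < K := by exact_mod_cast hK
  have hC0 : (0 : ℝ) < N.choose K := by exact_mod_cast Nat.choose_pos hKN
  have hN0 : (0 : ℝ) < N := by exact_mod_cast hK.trans hKN
  rw [gradient_const_mul_sum (fun i _ => (hdiff i).differentiableAt)]
  calc ((N.choose K : ℝ))⁻¹ *
        ∑ B ∈ univ.powersetCard K, ‖(K : ℝ)⁻¹ • ∑ i ∈ B, gradient (f i) x‖ ^ 2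
      = ((N.choose K : ℝ) * K ^ 2)⁻¹ *
        ∑ B ∈ univ.powersetCard K, ‖∑ i ∈ B, gradient (f i) x‖ ^ 2 := by
        simp only [norm_smul, mul_pow, ← mul_sum, norm_inv, RCLike.norm_natCast]
        ring
    _ ≤ ((N.choose K : ℝ) * K ^ 2)⁻¹ *
        ((N - 1).choose (K - 1) * ‖∑ i, gradient (f i) x‖ ^ 2) := by
        gcongr
        simpa using hbound
    _ = N / K * ‖(N : ℝ)⁻¹ • ∑ i, gradient (f i) x‖ ^ 2 := by
        rw [norm_smul, mul_pow, norm_inv, RCLike.norm_natCast]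
        field_simp
        linear_combination ‖∑ i, gradient (f i) x‖ ^ 2 * hcount

/-- If the gradients are on average positively correlated, then the finite sum
`f = (1/N) ∑ fᵢ` satisfies the strong growth condition with constant `N/K` for every
batch size `K`. -/
theorem stmt2 {d N : ℕ} (hN : 2 ≤ N)
    (f : Fin N → EuclideanSpace ℝ (Fin d) → ℝ)
    (hdiff : ∀ i, Differentiable ℝ (f i))
    (hposcorr : ∀ x : EuclideanSpace ℝ (Fin d),
      0 ≤ ∑ i : Fin N, ∑ j ∈ Finset.univ.filter (fun j => i < j),
        ⟪gradient (f i) x, gradient (f j) x⟫) :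
    ∀ K : ℕ, 1 ≤ K → K ≤ N → ∀ x : EuclideanSpace ℝ (Fin d),
      ((N.choose K : ℝ))⁻¹ *
        ∑ B ∈ Finset.powersetCard K (Finset.univ : Finset (Fin N)),
          ‖(K : ℝ)⁻¹ • ∑ i ∈ B, gradient (f i) x‖ ^ 2
      ≤ ((N : ℝ) / K) * ‖gradient (fun y => (N : ℝ)⁻¹ * ∑ i, f i y) x‖ ^ 2 :=
  stmt2_general f hdiff hposcorr
end Counting
end

section
/- Let f = (1/N)∑_{i=1}^N f_i where each f_i is L_i-smooth, suppose interpolation holds (there exists x* minimizing f with x* ∈ argmin f_i for all i), and let L_(K) = max over size-K batches B of (1/K)∑_{i∈B} L_i. Then for all x, E[‖∇̃_K(x)‖²] ≤ 2 L_(K) (f(x) − f*), where f* = f(x*) and the expectation is over the uniform random batch of size K. -/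
/-!
Each batch function `f_B = K⁻¹ ∑_{i ∈ B} f_i` has an `L_B`-Lipschitz gradient with
`L_B ≤ L_(K)`, and by interpolation it is minimized at `x*`. One gradient step of length
`1 / L_B` together with the descent lemma gives `‖∇f_B(x)‖² ≤ 2 L_(K) (f_B(x) - f_B(x*))`.
Averaging over all batches of size `K` recovers `f - f*`, since every index lies in the same
number `(N-1).choose (K-1)` of batches.
-/

open Finset RealInnerProductSpace

section Smooth

variable {F : Type*} [NormedAddCommGroup F] [InnerProductSpace ℝ F] [CompleteSpace F]
  {g : F → ℝ} {grad : F → F} {l : ℝ}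

theorem HasGradientAt.comp_add_smul {x z u : F} (t : ℝ) (h : HasGradientAt g z (x + t • u)) :
    HasDerivAt (fun s : ℝ => g (x + s • u)) ⟪z, u⟫ t := by
  have hline : HasDerivAt (fun s : ℝ => x + s • u) u t := by
    simpa using ((hasDerivAt_id t).smul_const u).const_add x
  simpa [Function.comp_def] using
    (hasGradientAt_iff_hasFDerivAt.mp h).comp_hasDerivAt t hline

theorem le_add_inner_add_sq_of_lipschitz_grad (hg : ∀ z, HasGradientAt g (grad z) z)
    (hlip : ∀ u v, ‖grad u - grad v‖ ≤ l * ‖u - v‖) (x y : F) :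
    g y ≤ g x + ⟪grad x, y - x⟫ + l / 2 * ‖y - x‖ ^ 2 := by
  set u := y - x
  -- `φ` is `g` along the segment minus its quadratic upper model; it is antitone on `t ≥ 0`.
  set φ : ℝ → ℝ := fun t => g (x + t • u) - t * ⟪grad x, u⟫ - l / 2 * t ^ 2 * ‖u‖ ^ 2
  have hφ (t : ℝ) : HasDerivAt φ (⟪grad (x + t • u) - grad x, u⟫ - l * t * ‖u‖ ^ 2) t := by
    refine ((((hg (x + t • u)).comp_add_smul t).fun_sub
      ((hasDerivAt_id' t).mul_const ⟪grad x, u⟫)).fun_sub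
      (((hasDerivAt_pow 2 t).const_mul (l / 2)).mul_const (‖u‖ ^ 2))).congr_deriv ?_
    rw [inner_sub_left]
    ring
  have hφ'_nonpos (t : ℝ) (ht : 0 ≤ t) : ⟪grad (x + t • u) - grad x, u⟫ - l * t * ‖u‖ ^ 2 ≤ 0 := by
    have hstep : ‖grad (x + t • u) - grad x‖ ≤ l * (t * ‖u‖) := by
      simpa [norm_smul, abs_of_nonneg ht] using hlip (x + t • u) x
    have := real_inner_le_norm (grad (x + t • u) - grad x) u
    nlinarith [norm_nonneg u]
  have hanti : AntitoneOn φ (Set.Ici 0) :=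
    antitoneOn_of_hasDerivWithinAt_nonpos (convex_Ici 0)
      (fun t _ => (hφ t).continuousAt.continuousWithinAt) (fun t _ => (hφ t).hasDerivWithinAt)
      (fun t ht => hφ'_nonpos t (interior_subset ht))
  have := hanti Set.self_mem_Ici (Set.mem_Ici.mpr zero_le_one) zero_le_one
  simp only [φ, u, one_smul, zero_smul, add_zero, add_sub_cancel] at this
  linarith

theorem HasGradientAt.eq_zero_of_forall_le {xs z : F} (h : HasGradientAt g z xs)
    (hmin : ∀ y, g xs ≤ g y) : z = 0 := by
  have := (IsMinOn.isLocalMin (isMinOn_univ_iff.mpr hmin) Filter.univ_mem).hasFDerivAt_eq_zero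
    (hasGradientAt_iff_hasFDerivAt.mp h)
  simpa using this

theorem sq_norm_grad_le_of_lipschitz_grad (hg : ∀ z, HasGradientAt g (grad z) z)
    (hlip : ∀ u v, ‖grad u - grad v‖ ≤ l * ‖u - v‖) {xs : F} (hmin : ∀ y, g xs ≤ g y) (x : F) :
    ‖grad x‖ ^ 2 ≤ 2 * l * (g x - g xs) := by
  rcases lt_or_ge 0 l with hl | hl
  · have hdesc := le_add_inner_add_sq_of_lipschitz_grad hg hlip x (x - l⁻¹ • grad x)
    rw [sub_sub_cancel_left, inner_neg_right, real_inner_smul_right, real_inner_self_eq_norm_sq,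
      norm_neg, norm_smul, Real.norm_of_nonneg (inv_nonneg.mpr hl.le)] at hdesc
    have hval : g x + -(l⁻¹ * ‖grad x‖ ^ 2) + l / 2 * (l⁻¹ * ‖grad x‖) ^ 2
        = g x - ‖grad x‖ ^ 2 / (2 * l) := by
      field_simp
      ring
    have hstep : ‖grad x‖ ^ 2 / (2 * l) ≤ g x - g xs := by
      linarith [hmin (x - l⁻¹ • grad x)]
    rw [div_le_iff₀ (by positivity)] at hstep
    linarith
  · -- For `l ≤ 0` the hypotheses force `g x = g xs` and `grad x = 0`.
    have hgrad_xs := (hg xs).eq_zero_of_forall_le hmin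
    have hdesc := le_add_inner_add_sq_of_lipschitz_grad hg hlip xs x
    have hgrad_x : ‖grad x‖ ≤ l * ‖x - xs‖ := by simpa [hgrad_xs] using hlip x xs
    rw [hgrad_xs, inner_zero_left, add_zero] at hdesc
    nlinarith [hmin x, norm_nonneg (grad x), norm_nonneg (x - xs)]

end Smooth

section Batch

variable {F ι : Type*} [NormedAddCommGroup F] [InnerProductSpace ℝ F] [CompleteSpace F]
  {f : ι → F → ℝ} {L : ι → ℝ}

theorem hasGradientAt_const_mul_sum (hdiff : ∀ i, Differentiable ℝ (f i)) (s : Finset ι) (c : ℝ)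
    (x : F) : HasGradientAt (fun y => c * ∑ i ∈ s, f i y) (c • ∑ i ∈ s, gradient (f i) x) x := by
  rw [hasGradientAt_iff_hasFDerivAt, map_smul, map_sum]
  exact (HasFDerivAt.fun_sum fun i _ =>
    hasGradientAt_iff_hasFDerivAt.mp (hdiff i x).hasGradientAt).const_mul c

theorem norm_smul_sum_gradient_sub_le
    (hlip : ∀ i x y, ‖gradient (f i) x - gradient (f i) y‖ ≤ L i * ‖x - y‖)
    (s : Finset ι) {c : ℝ} (hc : 0 ≤ c) (x y : F) :
    ‖c • ∑ i ∈ s, gradient (f i) x - c • ∑ i ∈ s, gradient (f i) y‖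
      ≤ (c * ∑ i ∈ s, L i) * ‖x - y‖ := by
  rw [← smul_sub, ← sum_sub_distrib, norm_smul, Real.norm_of_nonneg hc, mul_assoc, sum_mul]
  gcongr
  exact (norm_sum_le _ _).trans (sum_le_sum fun i _ => hlip i x y)

theorem sq_norm_smul_sum_gradient_le (hdiff : ∀ i, Differentiable ℝ (f i))
    (hlip : ∀ i x y, ‖gradient (f i) x - gradient (f i) y‖ ≤ L i * ‖x - y‖)
    {xs : F} (hinterp : ∀ i y, f i xs ≤ f i y) (s : Finset ι) {c : ℝ} (hc : 0 ≤ c) (x : F) :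
    ‖c • ∑ i ∈ s, gradient (f i) x‖ ^ 2
      ≤ 2 * (c * ∑ i ∈ s, L i) * (c * ∑ i ∈ s, (f i x - f i xs)) := by
  rw [sum_sub_distrib, mul_sub]
  exact sq_norm_grad_le_of_lipschitz_grad (hasGradientAt_const_mul_sum hdiff s c)
    (norm_smul_sum_gradient_sub_le hlip s hc)
    (fun y => mul_le_mul_of_nonneg_left (sum_le_sum fun i _ => hinterp i y) hc) x

end Batch

theorem sum_powersetCard_sum_eq_choose_mul {α M : Type*} [DecidableEq α] [AddCommMonoid M]
    (s : Finset α) (k : ℕ) (a : α → M) :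
    ∑ B ∈ s.powersetCard (k + 1), ∑ i ∈ B, a i = (#s - 1).choose k • ∑ i ∈ s, a i := by
  rw [sum_comm' (t' := s) (s' := fun i => (s.powersetCard (k + 1)).filter (i ∈ ·))]
  · rw [smul_sum]
    refine sum_congr rfl fun i hi => ?_
    simp_rw [sum_const, ← singleton_subset_iff (a := i)]
    rw [card_filter_powersetCard_subset _ _ _ (singleton_subset_iff.mpr hi) (by simp)]
    simp
  · intro B i
    simp only [mem_filter, mem_powersetCard]
    exact ⟨fun h => ⟨h, h.1.1 h.2⟩, fun h => h.1⟩

theorem inv_choose_mul_sum_powersetCard_average {α : Type*} [DecidableEq α] (s : Finset α)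
    {k : ℕ} (hk : 1 ≤ k) (hks : k ≤ #s) (a : α → ℝ) :
    ((#s).choose k : ℝ)⁻¹ * ∑ B ∈ s.powersetCard k, (k : ℝ)⁻¹ * ∑ i ∈ B, a i
      = (#s : ℝ)⁻¹ * ∑ i ∈ s, a i := by
  obtain ⟨j, rfl⟩ := Nat.exists_eq_add_of_le' hk
  obtain ⟨n, hn⟩ := Nat.exists_eq_add_of_le' (hk.trans hks)
  have hchoose : ((n + 1 : ℕ) : ℝ) * n.choose j = (n + 1).choose (j + 1) * (j + 1 : ℕ) := by
    exact_mod_cast Nat.add_one_mul_choose_eq n j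
  have hpos : (0 : ℝ) < (n + 1).choose (j + 1) := by
    exact_mod_cast Nat.choose_pos (hn ▸ hks)
  rw [← mul_sum, sum_powersetCard_sum_eq_choose_mul, nsmul_eq_mul, hn, Nat.add_sub_cancel]
  field_simp
  push_cast at hchoose ⊢
  linear_combination (∑ i ∈ s, a i) * hchoose

theorem stmt9_general {d N : ℕ} (K : ℕ) (hK : 1 ≤ K) (hKN : K ≤ N)
    (f : Fin N → EuclideanSpace ℝ (Fin d) → ℝ)
    (L : Fin N → ℝ)
    (hdiff : ∀ i, Differentiable ℝ (f i))
    (hlip : ∀ i, ∀ x y : EuclideanSpace ℝ (Fin d),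
      ‖gradient (f i) x - gradient (f i) y‖ ≤ L i * ‖x - y‖)
    (xstar : EuclideanSpace ℝ (Fin d))
    (hinterp : ∀ i, ∀ y, f i xstar ≤ f i y)
    (LK : ℝ)
    (hLK : IsGreatest
      {l : ℝ | ∃ B ∈ Finset.powersetCard K (Finset.univ : Finset (Fin N)),
        l = (K : ℝ)⁻¹ * ∑ i ∈ B, L i} LK) :
    ∀ x : EuclideanSpace ℝ (Fin d),
      ((N.choose K : ℝ))⁻¹ *
          ∑ B ∈ Finset.powersetCard K (Finset.univ : Finset (Fin N)),
            ‖(K : ℝ)⁻¹ • ∑ i ∈ B, gradient (f i) x‖ ^ 2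
        ≤ 2 * LK * ((N : ℝ)⁻¹ * ∑ i, f i x - (N : ℝ)⁻¹ * ∑ i, f i xstar) := by
  intro x
  have hbatch : ∀ B ∈ powersetCard K (univ : Finset (Fin N)),
      ‖(K : ℝ)⁻¹ • ∑ i ∈ B, gradient (f i) x‖ ^ 2
        ≤ 2 * LK * ((K : ℝ)⁻¹ * ∑ i ∈ B, (f i x - f i xstar)) := fun B hB =>
    (sq_norm_smul_sum_gradient_le hdiff hlip hinterp B (by positivity) x).trans <| by
      gcongr
      · exact mul_nonneg (by positivity) (sum_nonneg fun i _ => sub_nonneg.mpr (hinterp i x))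
      · exact hLK.2 ⟨B, hB, rfl⟩
  have haverage := inv_choose_mul_sum_powersetCard_average (univ : Finset (Fin N)) hK
    (by simpa using hKN) (fun i => f i x - f i xstar)
  rw [card_univ, Fintype.card_fin] at haverage
  calc _ ≤ ((N.choose K : ℝ))⁻¹ * ∑ B ∈ powersetCard K (univ : Finset (Fin N)),
          2 * LK * ((K : ℝ)⁻¹ * ∑ i ∈ B, (f i x - f i xstar)) :=
        mul_le_mul_of_nonneg_left (sum_le_sum hbatch) (by positivity)
    _ = 2 * LK * ((N : ℝ)⁻¹ * ∑ i, (f i x - f i xstar)) := by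
      rw [← haverage, ← mul_sum]; ring
    _ = _ := by rw [sum_sub_distrib]; ring

/-- Under smoothness of each `fᵢ` and interpolation, the expected squared norm of the
batch gradient estimator is bounded by `2 L_(K) (f(x) - f*)`, where `L_(K)` is the
maximal average smoothness constant over batches of size `K`. -/
theorem stmt9 {d N : ℕ} (hN : 1 ≤ N) (K : ℕ) (hK : 1 ≤ K) (hKN : K ≤ N)
    (f : Fin N → EuclideanSpace ℝ (Fin d) → ℝ)
    (L : Fin N → ℝ)
    (hdiff : ∀ i, Differentiable ℝ (f i))
    (hlip : ∀ i, ∀ x y : EuclideanSpace ℝ (Fin d),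
      ‖gradient (f i) x - gradient (f i) y‖ ≤ L i * ‖x - y‖)
    (xstar : EuclideanSpace ℝ (Fin d))
    (hminf : ∀ y, (N : ℝ)⁻¹ * ∑ i, f i xstar ≤ (N : ℝ)⁻¹ * ∑ i, f i y)
    (hinterp : ∀ i, ∀ y, f i xstar ≤ f i y)
    (LK : ℝ)
    (hLK : IsGreatest
      {l : ℝ | ∃ B ∈ Finset.powersetCard K (Finset.univ : Finset (Fin N)),
        l = (K : ℝ)⁻¹ * ∑ i ∈ B, L i} LK) :
    ∀ x : EuclideanSpace ℝ (Fin d),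
      ((N.choose K : ℝ))⁻¹ *
          ∑ B ∈ Finset.powersetCard K (Finset.univ : Finset (Fin N)),
            ‖(K : ℝ)⁻¹ • ∑ i ∈ B, gradient (f i) x‖ ^ 2
        ≤ 2 * LK * ((N : ℝ)⁻¹ * ∑ i, f i x - (N : ℝ)⁻¹ * ∑ i, f i xstar) :=
  stmt9_general K hK hKN f L hdiff hlip xstar hinterp LK hLK
end

section
/- Let f : R^d → R be L-smooth and μ-strongly convex with minimizer x* and minimum f*, and suppose the unbiased stochastic gradient satisfies the strong growth condition with constant ρ ≥ 1. Consider SNAG: y_n = αx_n + (1−α)z_n, x_{n+1} = y_n − s∇̃(y_n), z_{n+1} = βz_n + (1−β)y_n − η∇̃(y_n), with s = 1/(Lρ), η = 1/(ρ√(μL)), β = 1 − (1/ρ)√(μ/L), α = 1/(1 + (1/ρ)√(μ/L)). Then the Lyapunov energy E_n = f(x_n) − f* + (μ/2)‖z_n − x*‖² satisfies E[E_{n+1} | F_n] ≤ (1 − (1/ρ)√(μ/L)) E_n. -/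
/-!
Pointwise in the sampled gradient `γ`, the energy after a step is at most a quadratic
`C + ⟪c, γ⟫ + a ‖γ‖²`: the descent lemma bounds `f` at the `x`-update, and the squared norm at
the `z`-update expands exactly. Taking expectations turns `⟪c, γ⟫` into `⟪c, ∇f y⟫` and bounds
`a ‖γ‖²` by `a ρ ‖∇f y‖²`; with `s = 1/(Lρ)` and `η = 1/(ρ√(μL))` the `‖∇f y‖²` terms cancel.
What is left is the deterministic Nesterov estimate: with `τ = ρ⁻¹ √(μ/L)` and
`v = (1 - τ) z + τ y - x*`, the coupling of `y` with `x` and `z` gives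
`τ v = (1 - τ)(y - x) + τ(y - x*)`, so the first-order strong convexity inequalities at `x` and
`x*` and the convexity of `‖·‖²` bound `f y - f* + μ/2 ‖v‖² - τ ⟪∇f y, v⟫` by `(1 - τ) E`.
-/

open MeasureTheory RealInnerProductSpace Set

lemma ConvexOn.add_fderiv_sub_le {E : Type*} [NormedAddCommGroup E] [NormedSpace ℝ E]
    {f : E → ℝ} {f' : E →L[ℝ] ℝ} {x : E} (hf : ConvexOn ℝ univ f) (hf' : HasFDerivAt f f' x)
    (y : E) : f x + f' (y - x) ≤ f y := by
  have hφ' : HasDerivAt (f ∘ AffineMap.lineMap x y) (f' (y - x)) (0 : ℝ) :=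
    hf'.comp_hasDerivAt_of_eq 0 AffineMap.hasDerivAt_lineMap (by simp)
  have := (hf.comp_affineMap _).le_slope_of_hasDerivAt (mem_univ 0) (mem_univ 1) one_pos hφ'
  simp only [slope_def_field, Function.comp_apply, AffineMap.lineMap_apply_one,
    AffineMap.lineMap_apply_zero, sub_zero, div_one] at this
  linarith

section Parameters
variable {L μ ρ : ℝ}

lemma inv_mul_sqrt_div_le_one (hL : 0 < L) (hμL : μ ≤ L) (hρ : 1 ≤ ρ) :
    ρ⁻¹ * √(μ / L) ≤ 1 :=
  mul_le_one₀ (inv_le_one_of_one_le₀ hρ) (Real.sqrt_nonneg _)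
    (Real.sqrt_le_one.2 ((div_le_one hL).2 hμL))

lemma mul_inv_mul_sqrt_mul (hL : 0 < L) (hμ : 0 < μ) :
    μ * (ρ * √(μ * L))⁻¹ = ρ⁻¹ * √(μ / L) := by
  have hsqrt : √(μ / L) * √(μ * L) = μ := by
    rw [← Real.sqrt_mul (div_pos hμ hL).le, show μ / L * (μ * L) = μ ^ 2 by field_simp,
      Real.sqrt_sq hμ.le]
  have : √(μ * L) ≠ 0 := (Real.sqrt_pos.2 (mul_pos hμ hL)).ne'
  rw [mul_inv]
  field_simp
  rw [mul_comm, hsqrt]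

lemma snag_step_sizes_balance (hL : 0 < L) (hμ : 0 < μ) (hρ : 0 < ρ) :
    (L * (L * ρ)⁻¹ ^ 2 / 2 + μ * (ρ * √(μ * L))⁻¹ ^ 2 / 2) * ρ = (L * ρ)⁻¹ := by
  have hsq : √(μ * L) ^ 2 = μ * L := Real.sq_sqrt (mul_pos hμ hL).le
  rw [inv_pow (ρ * _), mul_pow, hsq]
  field_simp
  ring

end Parameters

section
variable {E : Type*} [NormedAddCommGroup E] [InnerProductSpace ℝ E] [CompleteSpace E]
  {f : E → ℝ}

lemma StrongConvexOn.add_inner_add_norm_sq_le {μ : ℝ} (hf : StrongConvexOn univ μ f)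
    {x : E} (hfx : DifferentiableAt ℝ f x) (y : E) :
    f x + ⟪gradient f x, y - x⟫ + μ / 2 * ‖y - x‖ ^ 2 ≤ f y := by
  have hd := hfx.hasGradientAt.hasFDerivAt.sub
    ((hasStrictFDerivAt_norm_sq x).hasFDerivAt.const_mul (μ / 2))
  have h := (strongConvexOn_iff_convex.1 hf).add_fderiv_sub_le hd y
  simp only [sub_apply, InnerProductSpace.toDual_apply_apply, smul_apply, innerSL_apply_apply,
    smul_eq_mul, nsmul_eq_mul, Nat.cast_ofNat] at h
  have hy : ‖y‖ ^ 2 = ‖x‖ ^ 2 + 2 * ⟪x, y - x⟫ + ‖y - x‖ ^ 2 := by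
    simpa using norm_add_sq_real x (y - x)
  rw [hy] at h
  linarith

lemma le_add_inner_add_norm_sq_of_gradient_lipschitz {L : ℝ} (hf : Differentiable ℝ f)
    (hL : ∀ a b, ‖gradient f a - gradient f b‖ ≤ L * ‖a - b‖) (y u : E) :
    f (y + u) ≤ f y + ⟪gradient f y, u⟫ + L / 2 * ‖u‖ ^ 2 := by
  set G := gradient f y
  have hφ (t : ℝ) : HasDerivAt (fun t : ℝ => f (y + t • u)) ⟪gradient f (y + t • u), u⟫ t := by
    have hline : HasDerivAt (fun t : ℝ => y + t • u) u t := by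
      simpa using ((hasDerivAt_id t).smul_const u).const_add y
    exact ((hf _).hasGradientAt.hasFDerivAt.comp_hasDerivAt t hline).congr_deriv (by simp)
  have hB (t : ℝ) : HasDerivAt (fun t : ℝ => f y + t * ⟪G, u⟫ + L / 2 * t ^ 2 * ‖u‖ ^ 2)
      (⟪G, u⟫ + L * t * ‖u‖ ^ 2) t := by
    have := (((hasDerivAt_id t).mul_const ⟪G, u⟫).const_add (f y)).add
      (((hasDerivAt_pow 2 t).const_mul (L / 2)).mul_const (‖u‖ ^ 2))
    exact this.congr_deriv (by push_cast; ring)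
  have hbound (t : ℝ) (ht : t ∈ Ico (0 : ℝ) 1) :
      ⟪gradient f (y + t • u), u⟫ ≤ ⟪G, u⟫ + L * t * ‖u‖ ^ 2 :=
    calc ⟪gradient f (y + t • u), u⟫ = ⟪G, u⟫ + ⟪gradient f (y + t • u) - G, u⟫ := by
          rw [inner_sub_left]; ring
      _ ≤ ⟪G, u⟫ + ‖gradient f (y + t • u) - G‖ * ‖u‖ := by
          gcongr; exact real_inner_le_norm _ _
      _ ≤ ⟪G, u⟫ + L * ‖t • u‖ * ‖u‖ := by
          gcongr; simpa using hL (y + t • u) y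
      _ = ⟪G, u⟫ + L * t * ‖u‖ ^ 2 := by
          rw [norm_smul, Real.norm_of_nonneg ht.1]; ring
  have := image_le_of_deriv_right_le_deriv_boundary
    (fun t _ => (hφ t).continuousAt.continuousWithinAt) (fun t _ => (hφ t).hasDerivWithinAt)
    (by simp) (fun t _ => (hB t).continuousAt.continuousWithinAt)
    (fun t _ => (hB t).hasDerivWithinAt) hbound (right_mem_Icc.2 zero_le_one)
  simpa using this

lemma integral_const_add_inner_add_mul_norm_sq {Ω : Type*} [MeasurableSpace Ω] {P : Measure Ω}
    [IsProbabilityMeasure P] {X : Ω → E} (hX : Integrable X P)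
    (hX2 : Integrable (fun ω => ‖X ω‖ ^ 2) P) (C a : ℝ) (c : E) :
    ∫ ω, (C + ⟪c, X ω⟫ + a * ‖X ω‖ ^ 2) ∂P = C + ⟪c, ∫ ω, X ω ∂P⟫ + a * ∫ ω, ‖X ω‖ ^ 2 ∂P := by
  have hlin : Integrable (fun ω => C + ⟪c, X ω⟫) P := (integrable_const C).add (hX.const_inner c)
  rw [integral_add hlin (hX2.const_mul a), integral_add (integrable_const C) (hX.const_inner c),
    integral_const, integral_inner hX c, integral_const_mul, probReal_univ, one_smul]

lemma snag_energy_le_quadratic {L μ s η : ℝ} (hf : Differentiable ℝ f)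
    (hL : ∀ a b, ‖gradient f a - gradient f b‖ ≤ L * ‖a - b‖) (y w xstar γ : E) :
    f (y - s • γ) - f xstar + μ / 2 * ‖w - η • γ - xstar‖ ^ 2
      ≤ f y - f xstar + μ / 2 * ‖w - xstar‖ ^ 2
        + ⟪-(s • gradient f y + (μ * η) • (w - xstar)), γ⟫
        + (L * s ^ 2 / 2 + μ * η ^ 2 / 2) * ‖γ‖ ^ 2 := by
  have hdescent := le_add_inner_add_norm_sq_of_gradient_lipschitz hf hL y (-(s • γ))
  rw [← sub_eq_add_neg, inner_neg_right, real_inner_smul_right, norm_neg, norm_smul,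
    Real.norm_eq_abs, mul_pow, sq_abs] at hdescent
  have hexpand : ‖w - η • γ - xstar‖ ^ 2
      = ‖w - xstar‖ ^ 2 - 2 * (η * ⟪w - xstar, γ⟫) + η ^ 2 * ‖γ‖ ^ 2 := by
    rw [sub_right_comm, norm_sub_sq_real, real_inner_smul_right, norm_smul, Real.norm_eq_abs,
      mul_pow, sq_abs]
  rw [hexpand, inner_neg_left, inner_add_left, real_inner_smul_left, real_inner_smul_left]
  linarith

lemma nesterov_energy_le {μ τ : ℝ} (hf : Differentiable ℝ f) (hsc : StrongConvexOn univ μ f)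
    (hμ : 0 ≤ μ) (hτ₀ : 0 ≤ τ) (hτ₁ : τ ≤ 1) {x z y : E}
    (hy : y = (1 + τ)⁻¹ • x + (1 - (1 + τ)⁻¹) • z) (xstar : E) :
    f y - f xstar + μ / 2 * ‖(1 - τ) • z + τ • y - xstar‖ ^ 2
        - τ * ⟪gradient f y, (1 - τ) • z + τ • y - xstar⟫
      ≤ (1 - τ) * (f x - f xstar + μ / 2 * ‖z - xstar‖ ^ 2) := by
  set G := gradient f y
  have hzy : τ • (z - y) = y - x := by
    have hτ : (1 + τ) * (1 + τ)⁻¹ = 1 := mul_inv_cancel₀ (by positivity)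
    have hy' : (1 + τ) • y = x + τ • z := by
      rw [hy, smul_add, smul_smul, smul_smul, hτ, mul_one_sub, hτ, one_smul]
      congr 2; ring
    linear_combination (norm := module) -hy'
  have hinner : τ * ⟪G, (1 - τ) • z + τ • y - xstar⟫
      = (1 - τ) * ⟪G, y - x⟫ + τ * ⟪G, y - xstar⟫ := by
    have hsplit : τ • ((1 - τ) • z + τ • y - xstar) = (1 - τ) • (y - x) + τ • (y - xstar) := by
      linear_combination (norm := module) (1 - τ) • hzy
    rw [← real_inner_smul_right, hsplit, inner_add_right, real_inner_smul_right,
      real_inner_smul_right]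
  have hnorm : ‖(1 - τ) • z + τ • y - xstar‖ ^ 2
      ≤ (1 - τ) * ‖z - xstar‖ ^ 2 + τ * ‖y - xstar‖ ^ 2 := by
    have hsplit : (1 - τ) • z + τ • y - xstar = (1 - τ) • (z - xstar) + τ • (y - xstar) := by
      module
    rw [hsplit]
    exact (convexOn_univ_norm.pow (fun _ _ => norm_nonneg _) 2).2 trivial trivial
      (sub_nonneg.2 hτ₁) hτ₀ (by ring)
  have hx := hsc.add_inner_add_norm_sq_le (hf y) x
  have hxstar := hsc.add_inner_add_norm_sq_le (hf y) xstar
  rw [← neg_sub, inner_neg_right, norm_neg] at hx hxstar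
  have h₁ : (1 - τ) * (f y - f x) ≤ (1 - τ) * ⟪G, y - x⟫ :=
    mul_le_mul_of_nonneg_left (by linarith [(by positivity : 0 ≤ μ / 2 * ‖y - x‖ ^ 2)])
      (sub_nonneg.2 hτ₁)
  have h₂ : τ * (f y - f xstar + μ / 2 * ‖y - xstar‖ ^ 2) ≤ τ * ⟪G, y - xstar⟫ :=
    mul_le_mul_of_nonneg_left (by linarith) hτ₀
  have h₃ := mul_le_mul_of_nonneg_left hnorm (by positivity : 0 ≤ μ / 2)
  linarith

end

theorem stmt13_general {Ω : Type*} [MeasurableSpace Ω] (P : Measure Ω) [IsProbabilityMeasure P]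
    {d : ℕ} (f : EuclideanSpace ℝ (Fin d) → ℝ) (L μ ρ : ℝ)
    (hL : 0 < L) (hμ : 0 < μ) (hμL : μ ≤ L) (hρ : 1 ≤ ρ)
    (hdiff : Differentiable ℝ f)
    (hsmooth : ∀ x y : EuclideanSpace ℝ (Fin d),
      ‖gradient f x - gradient f y‖ ≤ L * ‖x - y‖)
    (hsc : StrongConvexOn Set.univ μ f)
    (xstar : EuclideanSpace ℝ (Fin d)) (hmin : ∀ v, f xstar ≤ f v)
    (g : EuclideanSpace ℝ (Fin d) → Ω → EuclideanSpace ℝ (Fin d))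
    (hunbiased : ∀ v, ∫ ω, g v ω ∂P = gradient f v)
    (hsgc : ∀ v, ∫ ω, ‖g v ω‖ ^ 2 ∂P ≤ ρ * ‖gradient f v‖ ^ 2)
    (x z y : EuclideanSpace ℝ (Fin d))
    (hy : y = (1 + ρ⁻¹ * Real.sqrt (μ / L))⁻¹ • x
        + (1 - (1 + ρ⁻¹ * Real.sqrt (μ / L))⁻¹) • z)
    (hgint : Integrable (g y) P)
    (hg2int : Integrable (fun ω => ‖g y ω‖ ^ 2) P) :
    ∫ ω, (f (y - (L * ρ)⁻¹ • g y ω) - f xstar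
        + μ / 2 * ‖((1 - ρ⁻¹ * Real.sqrt (μ / L)) • z
            + (ρ⁻¹ * Real.sqrt (μ / L)) • y
            - (ρ * Real.sqrt (μ * L))⁻¹ • g y ω) - xstar‖ ^ 2) ∂P
      ≤ (1 - ρ⁻¹ * Real.sqrt (μ / L))
          * (f x - f xstar + μ / 2 * ‖z - xstar‖ ^ 2) := by
  set τ := ρ⁻¹ * √(μ / L)
  set G := gradient f y
  set w := (1 - τ) • z + τ • y
  set C := f y - f xstar + μ / 2 * ‖w - xstar‖ ^ 2
  set c := -((L * ρ)⁻¹ • G + (μ * (ρ * √(μ * L))⁻¹) • (w - xstar))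
  set a := L * (L * ρ)⁻¹ ^ 2 / 2 + μ * (ρ * √(μ * L))⁻¹ ^ 2 / 2
  have hρ₀ : 0 < ρ := one_pos.trans_le hρ
  calc _ ≤ ∫ ω, (C + ⟪c, g y ω⟫ + a * ‖g y ω‖ ^ 2) ∂P :=
        integral_mono_of_nonneg
          (ae_of_all _ fun ω => add_nonneg (sub_nonneg.2 (hmin _)) (by positivity))
          (((integrable_const C).add (hgint.const_inner c)).add (hg2int.const_mul a))
          (ae_of_all _ fun ω => snag_energy_le_quadratic hdiff hsmooth y w xstar (g y ω))
    _ = C + ⟪c, G⟫ + a * ∫ ω, ‖g y ω‖ ^ 2 ∂P := by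
        rw [integral_const_add_inner_add_mul_norm_sq hgint hg2int, hunbiased]
    _ ≤ C + ⟪c, G⟫ + a * (ρ * ‖G‖ ^ 2) := by gcongr; exact hsgc y
    _ = C - τ * ⟪G, w - xstar⟫ := by
        rw [inner_neg_left, inner_add_left, real_inner_smul_left, real_inner_smul_left,
          real_inner_self_eq_norm_sq, mul_inv_mul_sqrt_mul hL hμ, real_inner_comm]
        linear_combination ‖G‖ ^ 2 * snag_step_sizes_balance hL hμ hρ₀
    _ ≤ _ := nesterov_energy_le hdiff hsc hμ.le (by positivity)
          (inv_mul_sqrt_div_le_one hL hμL hρ) hy xstar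

/-- One step of SNAG for an `L`-smooth, `μ`-strongly convex function under the strong
growth condition with constant `ρ`: the Lyapunov energy
`E = f(x) - f* + (μ/2)‖z - x*‖²` contracts by the factor `1 - (1/ρ)√(μ/L)` in
conditional expectation. -/
theorem stmt13 {Ω : Type*} [MeasurableSpace Ω] (P : Measure Ω) [IsProbabilityMeasure P]
    {d : ℕ} (f : EuclideanSpace ℝ (Fin d) → ℝ) (L μ ρ : ℝ)
    (hL : 0 < L) (hμ : 0 < μ) (hμL : μ ≤ L) (hρ : 1 ≤ ρ)
    (hdiff : Differentiable ℝ f)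
    (hsmooth : ∀ x y : EuclideanSpace ℝ (Fin d),
      ‖gradient f x - gradient f y‖ ≤ L * ‖x - y‖)
    (hsc : StrongConvexOn Set.univ μ f)
    (xstar : EuclideanSpace ℝ (Fin d)) (hmin : ∀ v, f xstar ≤ f v)
    (g : EuclideanSpace ℝ (Fin d) → Ω → EuclideanSpace ℝ (Fin d))
    (hunbiased : ∀ v, ∫ ω, g v ω ∂P = gradient f v)
    (hsgc : ∀ v, ∫ ω, ‖g v ω‖ ^ 2 ∂P ≤ ρ * ‖gradient f v‖ ^ 2)
    (x z y : EuclideanSpace ℝ (Fin d))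
    (hy : y = (1 + ρ⁻¹ * Real.sqrt (μ / L))⁻¹ • x
        + (1 - (1 + ρ⁻¹ * Real.sqrt (μ / L))⁻¹) • z)
    (hgint : Integrable (g y) P)
    (hg2int : Integrable (fun ω => ‖g y ω‖ ^ 2) P)
    (hfint : Integrable (fun ω => f (y - (L * ρ)⁻¹ • g y ω)) P) :
    ∫ ω, (f (y - (L * ρ)⁻¹ • g y ω) - f xstar
        + μ / 2 * ‖((1 - ρ⁻¹ * Real.sqrt (μ / L)) • z
            + (ρ⁻¹ * Real.sqrt (μ / L)) • y
            - (ρ * Real.sqrt (μ * L))⁻¹ • g y ω) - xstar‖ ^ 2) ∂P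
      ≤ (1 - ρ⁻¹ * Real.sqrt (μ / L))
          * (f x - f xstar + μ / 2 * ‖z - xstar‖ ^ 2) :=
  stmt13_general P f L μ ρ hL hμ hμL hρ hdiff hsmooth hsc xstar hmin g hunbiased hsgc x z y hy hgint
    hg2int
end
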